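/- Let (Ω, 𝔽, ℙ) be an atomless probability space, X a nonnegative random variable with essential supremum M < ∞ and survival function S_X = 1 − F_X, F₀ a continuous cdf on ℝ, g a distortion function, ϱ ≥ 0, and w₀, ξ real numbers. Define z₀ = sup{ z ∈ ℝ : (1+ϱ) g(S_X(z)) ≥ 1 } and K(z,y) = F_X(y) + F₀( w₀ − (1+ϱ)∫_z^y g(S_X(t)) dt − ξ − z ) for 0 ≤ z ≤ y ≤ M. Suppose y* ∈ [0, M] maximizes y ↦ K(min{y, z₀}, y) over [0, M], and set z* = min{y*, z₀} and I* = I_{z*,y*}. Then I* is an optimal solution of the distributionally robust problem sup_{I∈𝓘} inf_{Y ~ F₀} ℙ( w₀ − Y − X + I(X) − π^g(I(X)) ≥ ξ ): for every I ∈ 𝓘, the infimum of ℙ( w₀ − Y − X + I(X) − π^g(I(X)) ≥ ξ ) over all random variables Y on (Ω, 𝔽, ℙ) with cdf F₀ is at most the corresponding infimum for I*. -/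

import Mathlib

open MeasureTheory Filter Topology

/-- A measure is atomless if every set of positive measure contains a measurable subset of
strictly smaller, yet positive, measure. -/
def Atomless {Ω : Type*} [MeasurableSpace Ω] (P : Measure Ω) : Prop :=
  ∀ s : Set Ω, MeasurableSet s → 0 < P s →
    ∃ t : Set Ω, t ⊆ s ∧ MeasurableSet t ∧ 0 < P t ∧ P t < P s

/-- A distortion function: increasing `g : [0,1] → [0,1]` with `g 0 = 0` and `g 1 = 1`. -/
def IsDistortion (g : ℝ → ℝ) : Prop :=
  MonotoneOn g (Set.Icc 0 1) ∧ (∀ x ∈ Set.Icc (0:ℝ) 1, g x ∈ Set.Icc (0:ℝ) 1) ∧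
    g 0 = 0 ∧ g 1 = 1

/-- The cdf of a real random variable `Z` under `P`. -/
noncomputable def cdfOf {Ω : Type*} [MeasurableSpace Ω] (P : Measure Ω) (Z : Ω → ℝ) :
    ℝ → ℝ := fun z => (P {ω | Z ω ≤ z}).toReal

/-- Distorted expectation `E^g[Z] = ∫_0^∞ g(1 − F_Z(z)) dz` of a nonnegative random
variable `Z`. -/
noncomputable def distExp {Ω : Type*} [MeasurableSpace Ω] (g : ℝ → ℝ) (P : Measure Ω)
    (Z : Ω → ℝ) : ℝ := ∫ z in Set.Ioi (0 : ℝ), g (1 - cdfOf P Z z)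

/-- The ceded loss function `I_{z,y}`: `0` on `[0,z]`, `x − z` on `(z,y]`, `y − z` beyond. -/
noncomputable def Ifun (z y : ℝ) : ℝ → ℝ := fun x =>
  if x ≤ z then 0 else if x ≤ y then x - z else y - z

/-- A ceded loss function: `I(0) = 0`, with both `I` and `x ↦ x − I(x)` increasing on
`[0,∞)`. -/
def IsCeded (I : ℝ → ℝ) : Prop :=
  I 0 = 0 ∧ MonotoneOn I (Set.Ici 0) ∧ MonotoneOn (fun x => x - I x) (Set.Ici 0)

/-- The function `K(z,y) = F_X(y) + F₀(w₀ − (1+ϱ)∫_z^y g(S_X(t)) dt − ξ − z)`. -/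
noncomputable def Kfun {Ω : Type*} [MeasurableSpace Ω] (P : Measure Ω) (X : Ω → ℝ)
    (g F₀ : ℝ → ℝ) (ϱ w₀ ξ : ℝ) (z y : ℝ) : ℝ :=
  cdfOf P X y + F₀ (w₀ - (1 + ϱ) * (∫ t in z..y, g (1 - cdfOf P X t)) - ξ - z)

/-- The worst-case (over all background risks `Y` with cdf `F₀`) probability of the insurer
reaching the goal `ξ` under the ceded loss function `I`. -/
noncomputable def robustVal {Ω : Type*} [MeasurableSpace Ω] (P : Measure Ω) (X : Ω → ℝ)
    (g F₀ : ℝ → ℝ) (ϱ w₀ ξ : ℝ) (I : ℝ → ℝ) : ℝ :=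
  sInf {p : ℝ | ∃ Y : Ω → ℝ, Measurable Y ∧ (∀ z : ℝ, cdfOf P Y z = F₀ z) ∧
    p = (P {ω | ξ ≤ w₀ - Y ω - X ω + I (X ω)
        - (1 + ϱ) * distExp g P (fun ω' => I (X ω'))}).toReal}

/-!
If no random variable has cdf `F₀`, both robust values are `sInf ∅ = 0`. Otherwise fix
`Y₀ ∼ F₀` and put `κ = max (K(z*, y*) - 1) 0`.

For `I* = I_{z*,y*}` the event `{Y ≤ w₀ - π(I*) - ξ - z*}` lies in the success event up to
`{X > y*}`, so every `Y ∼ F₀` succeeds with probability at least `K(z*, y*) - 1`.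

For any `I ∈ 𝓘` the success event is `{Y ≤ Z_I}` with `Z_I = w₀ - ξ - π(I(X)) - (X - I(X))`.
Given `t`, let `s = w₀ - ξ - π(I(X)) - t` and let `y` be the largest loss whose retention under
`I` is at most `s`. Below `y` the contract `I` cedes at least the layer `I_{s,y}`, so
`π(I(X)) ≥ (1+ϱ)∫_s^y g(S_X)`; the choice of `z₀` makes `z ↦ (1+ϱ)∫_z^y g(S_X) + z` smallest
at `min y z₀`, and the maximality of `y*` then gives `F₀ t ≤ κ + ℙ(Z_I < t)`. A countermonotone
coupling yields `Y ∼ F₀` with `ℙ(Y ≤ Z_I) ≤ κ + ε`: it is built from the distributional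
transform of `Z_I`, whose atoms are split using the uniform variable `F₀(Y₀)`.
-/

open Set ProbabilityTheory

theorem Monotone.exists_eq_and_le_iff {f : ℝ → ℝ} (hf : Monotone f) (hc : Continuous f)
    {a b s : ℝ} (ha : f a ≤ s) (hb : s < f b) : ∃ c, f c = s ∧ ∀ x, f x ≤ s ↔ x ≤ c := by
  have hab : a ≤ b := (hf.reflect_lt (ha.trans_lt hb)).le
  obtain ⟨x, -, hx⟩ := intermediate_value_Icc hab hc.continuousOn ⟨ha, hb.le⟩
  have hbdd : BddAbove {x | f x ≤ s} :=
    ⟨b, fun y hy => le_of_not_gt fun hby => hb.not_ge ((hf hby.le).trans hy)⟩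
  have hmem : f (sSup {x | f x ≤ s}) ≤ s :=
    (isClosed_le hc continuous_const).csSup_mem ⟨a, ha⟩ hbdd
  refine ⟨_, le_antisymm hmem (hx.symm.trans_le (hf (le_csSup hbdd hx.le))), fun y => ?_⟩
  exact ⟨fun hy => le_csSup hbdd hy, fun hy => (hf hy).trans hmem⟩

section Cdf

variable {Ω : Type*} [MeasurableSpace Ω] {P : Measure Ω} {Z : Ω → ℝ}

lemma measureReal_inter_le_eq_add [IsFiniteMeasure P] {B : Set Ω} (hB : MeasurableSet B)
    (hZ : Measurable Z) (t : ℝ) :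
    P.real (B ∩ {ω | Z ω ≤ t}) = P.real (B ∩ {ω | Z ω < t}) + P.real (B ∩ {ω | Z ω = t}) := by
  rw [← measureReal_union (s₁ := B ∩ {ω | Z ω < t}) (s₂ := B ∩ {ω | Z ω = t})
    (disjoint_left.2 fun ω ⟨_, (h₁ : Z ω < t)⟩ ⟨_, (h₂ : Z ω = t)⟩ => h₁.ne h₂)
    (hB.inter (measurableSet_eq_fun hZ measurable_const))]
  congr 1
  ext ω
  simp [le_iff_lt_or_eq, and_or_left]

lemma measureReal_le_eq_lt_add_eq [IsFiniteMeasure P] (hZ : Measurable Z) (t : ℝ) :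
    P.real {ω | Z ω ≤ t} = P.real {ω | Z ω < t} + P.real {ω | Z ω = t} := by
  simpa using measureReal_inter_le_eq_add MeasurableSet.univ hZ t

lemma cdfOf_nonneg (Z : Ω → ℝ) (x : ℝ) : 0 ≤ cdfOf P Z x := measureReal_nonneg

lemma cdfOf_eq_zero_of_lt {v : ℝ} (hZ : ∀ ω, v < Z ω) : cdfOf P Z v = 0 := by
  rw [cdfOf, eq_empty_of_forall_notMem (s := {ω | Z ω ≤ v}) fun ω h => (hZ ω).not_ge h,
    ← measureReal_def, measureReal_empty]

variable [IsProbabilityMeasure P]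

lemma cdfOf_eq_cdf_map (hZ : Measurable Z) : cdfOf P Z = cdf (P.map Z) := by
  have := Measure.isProbabilityMeasure_map (μ := P) hZ.aemeasurable
  ext x
  rw [cdf_eq_real, map_measureReal_apply hZ measurableSet_Iic]
  rfl

lemma monotone_cdfOf (Z : Ω → ℝ) : Monotone (cdfOf P Z) := fun _ _ h =>
  measureReal_mono fun _ (hω : _ ≤ _) => hω.trans h

lemma cdfOf_le_one (Z : Ω → ℝ) (x : ℝ) : cdfOf P Z x ≤ 1 := measureReal_le_one

lemma one_sub_cdfOf_mem_Icc (Z : Ω → ℝ) (x : ℝ) : 1 - cdfOf P Z x ∈ Icc (0 : ℝ) 1 :=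
  ⟨sub_nonneg.2 (cdfOf_le_one Z x), sub_le_self _ (cdfOf_nonneg Z x)⟩

lemma tendsto_cdfOf_atBot (hZ : Measurable Z) : Tendsto (cdfOf P Z) atBot (𝓝 0) := by
  rw [cdfOf_eq_cdf_map hZ]
  exact tendsto_cdf_atBot _

lemma tendsto_cdfOf_atTop (hZ : Measurable Z) : Tendsto (cdfOf P Z) atTop (𝓝 1) := by
  rw [cdfOf_eq_cdf_map hZ]
  exact tendsto_cdf_atTop _

lemma measureReal_lt_eq_leftLim_cdfOf (hZ : Measurable Z) (t : ℝ) :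
    P.real {ω | Z ω < t} = Function.leftLim (cdfOf P Z) t := by
  have := Measure.isProbabilityMeasure_map (μ := P) hZ.aemeasurable
  have h := (cdf (P.map Z)).measure_Iio (tendsto_cdf_atBot _) t
  rw [measure_cdf, sub_zero, Measure.map_apply hZ measurableSet_Iio] at h
  rw [cdfOf_eq_cdf_map hZ, measureReal_def, show {ω | Z ω < t} = Z ⁻¹' Iio t from rfl, h,
    ENNReal.toReal_ofReal]
  exact (cdf_nonneg _ (t - 1)).trans ((monotone_cdf _).le_leftLim (by linarith))

lemma measureReal_gt_eq_one_sub_cdfOf (hZ : Measurable Z) (t : ℝ) :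
    P.real {ω | t < Z ω} = 1 - cdfOf P Z t := by
  rw [show {ω | t < Z ω} = {ω | Z ω ≤ t}ᶜ by ext; simp,
    probReal_compl_eq_one_sub (measurableSet_le hZ measurable_const)]
  rfl

lemma cdfOf_eq_one_of_ae_le {m v : ℝ} (hZ : ∀ᵐ ω ∂P, Z ω ≤ m) (hv : m ≤ v) :
    cdfOf P Z v = 1 := by
  have : {ω | Z ω ≤ v} =ᵐ[P] (univ : Set Ω) := by
    filter_upwards [hZ] with ω hω
    exact propext (iff_of_true (hω.trans hv) trivial)
  rw [cdfOf, ← measureReal_def, measureReal_congr this, probReal_univ]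

end Cdf

/-- The probability integral transform, for a finite measure. -/
lemma measureReal_cdf_comp_le {Ω : Type*} [MeasurableSpace Ω] {μ : Measure Ω}
    [IsFiniteMeasure μ] {T : Ω → ℝ} (hT : Measurable T)
    (hcont : Continuous fun x => μ.real {ω | T ω ≤ x}) {a s : ℝ}
    (ha : μ.real {ω | T ω ≤ a} ≤ s) (hs : s ≤ μ.real univ) :
    μ.real {ω | μ.real {ω' | T ω' ≤ T ω} ≤ s} = s := by
  set F := fun x => μ.real {ω | T ω ≤ x}
  rcases hs.lt_or_eq with hs | rfl
  · have htop : Tendsto F atTop (𝓝 (μ.real univ)) := by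
      have := (ENNReal.tendsto_toReal (measure_ne_top (μ.map T) univ)).comp
        (tendsto_measure_Iic_atTop (μ.map T))
      simp only [Function.comp_def, Measure.map_apply hT measurableSet_Iic,
        Measure.map_apply hT MeasurableSet.univ, preimage_univ] at this
      exact this
    obtain ⟨b, hb⟩ := (htop.eventually (lt_mem_nhds hs)).exists
    have hmono : Monotone F := fun x y h => measureReal_mono fun ω (hω : T ω ≤ x) => hω.trans h
    obtain ⟨c, hc, hiff⟩ := hmono.exists_eq_and_le_iff hcont ha hb
    rw [show {ω | F (T ω) ≤ s} = {ω | T ω ≤ c} by ext ω; exact hiff (T ω)]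
    exact hc
  · rw [show {ω | F (T ω) ≤ μ.real univ} = univ from
      eq_univ_of_forall fun ω => measureReal_mono (subset_univ _)]

section Uniform

variable {Ω : Type*} [MeasurableSpace Ω]

structure IsStdUniform (P : Measure Ω) (U : Ω → ℝ) : Prop where
  measurable : Measurable U
  mem_Icc : ∀ ω, U ω ∈ Icc (0 : ℝ) 1
  measureReal_le : ∀ u ∈ Icc (0 : ℝ) 1, P.real {ω | U ω ≤ u} = u

namespace IsStdUniform

variable {P : Measure Ω} [IsProbabilityMeasure P] {U : Ω → ℝ}

lemma of_Ioo (hU : Measurable U) (hmem : ∀ ω, U ω ∈ Icc (0 : ℝ) 1)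
    (h : ∀ u ∈ Ioo (0 : ℝ) 1, P.real {ω | U ω ≤ u} = u) : IsStdUniform P U := by
  refine ⟨hU, hmem, fun u hu => ?_⟩
  rcases hu.1.eq_or_lt with rfl | hu0
  · refine le_antisymm (le_of_forall_pos_le_add fun δ hδ => ?_) measureReal_nonneg
    have hδ' : min δ (1 / 2) ∈ Ioo (0 : ℝ) 1 := ⟨by positivity, by norm_num [min_le_right]⟩
    calc P.real {ω | U ω ≤ 0} ≤ P.real {ω | U ω ≤ min δ (1 / 2)} :=
          measureReal_mono fun ω (hω : U ω ≤ 0) => hω.trans hδ'.1.le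
      _ = min δ (1 / 2) := h _ hδ'
      _ ≤ 0 + δ := by simp
  rcases hu.2.eq_or_lt with rfl | hu1
  · rw [eq_univ_of_forall (s := {ω | U ω ≤ 1}) fun ω => (hmem ω).2, probReal_univ]
  · exact h u ⟨hu0, hu1⟩

variable (hU : IsStdUniform P U)
include hU

lemma measureReal_le_eq (x : ℝ) : P.real {ω | U ω ≤ x} = max 0 (min x 1) := by
  rcases lt_or_ge x 0 with hx | hx
  · rw [eq_empty_of_forall_notMem (s := {ω | U ω ≤ x})
        fun ω (h : U ω ≤ x) => (hU.mem_Icc ω).1.not_gt (h.trans_lt hx),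
      measureReal_empty, max_eq_left (min_le_of_left_le hx.le)]
  rcases le_or_gt x 1 with hx1 | hx1
  · rw [hU.measureReal_le x ⟨hx, hx1⟩, min_eq_left hx1, max_eq_right hx]
  · rw [eq_univ_of_forall (s := {ω | U ω ≤ x}) fun ω => (hU.mem_Icc ω).2.trans hx1.le,
      probReal_univ, min_eq_right hx1.le, max_eq_right zero_le_one]

lemma measureReal_le_inter_le_add (A : Set Ω) {a b : ℝ} (hab : a ≤ b) :
    P.real ({ω | U ω ≤ b} ∩ A) ≤ P.real ({ω | U ω ≤ a} ∩ A) + (b - a) := by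
  have hsub : {ω | U ω ≤ b} ∩ A ⊆ ({ω | U ω ≤ a} ∩ A) ∪ ({ω | U ω ≤ b} \ {ω | U ω ≤ a}) :=
    fun ω ⟨hb, hA⟩ => (em (U ω ≤ a)).imp (fun ha => ⟨ha, hA⟩) fun ha => ⟨hb, ha⟩
  have hdiff : P.real ({ω | U ω ≤ b} \ {ω | U ω ≤ a}) ≤ b - a := by
    rw [measureReal_sdiff (s₁ := {ω | U ω ≤ b}) (s₂ := {ω | U ω ≤ a})
      (fun ω (h : U ω ≤ a) => h.trans hab)
      (measurableSet_le hU.measurable measurable_const), hU.measureReal_le_eq,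
      hU.measureReal_le_eq]
    simp only [max_def, min_def]
    split_ifs <;> linarith
  exact (measureReal_mono hsub).trans ((measureReal_union_le _ _).trans (by linarith))

lemma continuous_measureReal_le_inter (A : Set Ω) :
    Continuous fun u => P.real ({ω | U ω ≤ u} ∩ A) := by
  refine (LipschitzWith.of_le_add fun x y => ?_).continuous
  rcases le_total x y with h | h
  · exact (measureReal_mono (inter_subset_inter_left _ fun ω (hω : U ω ≤ x) => hω.trans h)).trans
      (le_add_of_nonneg_right dist_nonneg)
  · simpa [Real.dist_eq, abs_of_nonneg (sub_nonneg.2 h)] using hU.measureReal_le_inter_le_add A h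

lemma measureReal_eq (u : ℝ) : P.real {ω | U ω = u} = 0 := by
  refine le_antisymm (le_of_forall_pos_le_add fun δ hδ => ?_) measureReal_nonneg
  have h := hU.measureReal_le_inter_le_add {ω | U ω = u} (sub_le_self u hδ.le)
  rwa [inter_eq_right.2 (show {ω | U ω = u} ⊆ {ω | U ω ≤ u} from fun ω (h : U ω = u) => h.le),
    eq_empty_of_forall_notMem (s := {ω | U ω ≤ u - δ} ∩ {ω | U ω = u})
      fun ω ⟨(h₁ : U ω ≤ u - δ), (h₂ : U ω = u)⟩ => by linarith,
    measureReal_empty, sub_sub_cancel] at h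

lemma ae_ne (u : ℝ) : ∀ᵐ ω ∂P, U ω ≠ u := by
  rw [ae_iff]
  simp only [ne_eq, not_not]
  exact (measureReal_eq_zero_iff (measure_ne_top _ _)).1 (hU.measureReal_eq u)

lemma measureReal_lt_eq (x : ℝ) : P.real {ω | U ω < x} = max 0 (min x 1) := by
  rw [← hU.measureReal_le_eq, measureReal_le_eq_lt_add_eq hU.measurable, hU.measureReal_eq,
    add_zero]

lemma measureReal_ge_eq {c : ℝ} (hc : c ∈ Icc (0 : ℝ) 1) : P.real {ω | c ≤ U ω} = 1 - c := by
  rw [show {ω | c ≤ U ω} = {ω | U ω < c}ᶜ by ext; simp,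
    probReal_compl_eq_one_sub (measurableSet_lt hU.measurable measurable_const),
    hU.measureReal_lt_eq, min_eq_left hc.2, max_eq_right hc.1]

lemma rotate {θ : ℝ} (hθ0 : 0 ≤ θ) (hθ1 : θ < 1) :
    IsStdUniform P fun ω => if U ω < 1 - θ then U ω + θ else U ω + θ - 1 := by
  refine of_Ioo ((hU.measurable.add_const θ).ite
    (measurableSet_lt hU.measurable measurable_const) ((hU.measurable.add_const θ).sub_const 1))
    (fun ω => ?_) fun c hc => ?_
  · have := hU.mem_Icc ω
    split_ifs with h <;> constructor <;> linarith [this.1, this.2]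
  have hset : {ω | (if U ω < 1 - θ then U ω + θ else U ω + θ - 1) ≤ c}
      = {ω | U ω ≤ c - θ} ∪ ({ω | U ω ≤ 1 + c - θ} \ {ω | U ω < 1 - θ}) := by
    ext ω
    simp only [mem_ofPred_eq, mem_union, Set.mem_sdiff, not_lt]
    split_ifs with h
    · refine ⟨fun h' => Or.inl (by linarith), ?_⟩
      rintro (h' | ⟨_, h'⟩) <;> linarith
    · rw [not_lt] at h
      refine ⟨fun h' => Or.inr ⟨by linarith, h⟩, ?_⟩
      rintro (h' | ⟨h', _⟩) <;> linarith [hc.2]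
  have hdisj : Disjoint {ω | U ω ≤ c - θ} ({ω | U ω ≤ 1 + c - θ} \ {ω | U ω < 1 - θ}) :=
    disjoint_left.2 fun ω (h₁ : U ω ≤ c - θ) h₂ =>
      h₂.2 (by simp only [mem_ofPred_eq]; linarith [hc.2])
  rw [hset, measureReal_union hdisj ((measurableSet_le hU.measurable measurable_const).diff
      (measurableSet_lt hU.measurable measurable_const)),
    measureReal_sdiff (s₁ := {ω | U ω ≤ 1 + c - θ}) (s₂ := {ω | U ω < 1 - θ})
      (fun ω (h : U ω < 1 - θ) => by simp only [mem_ofPred_eq]; linarith [hc.1])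
      (measurableSet_lt hU.measurable measurable_const),
    hU.measureReal_le_eq, hU.measureReal_le_eq, hU.measureReal_lt_eq]
  simp only [max_def, min_def]
  split_ifs <;> linarith [hc.1, hc.2]

end IsStdUniform

end Uniform

lemma measurable_uncurry_of_monotone_of_continuous {H : ℝ → ℝ → ℝ}
    (hmono : ∀ u, Monotone fun t => H t u) (hcont : ∀ t, Continuous (H t)) :
    Measurable (Function.uncurry H) :=
  (measurable_uncurry_of_continuous_of_measurable (u := fun u t => H t u) hcont
    fun u => (hmono u).measurable).comp measurable_swap

section DistTransform

variable {Ω : Type*} [MeasurableSpace Ω] {P : Measure Ω} {Z U : Ω → ℝ}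

/-- The distributional transform of `Z`: the atoms of `Z` are spread out uniformly by ranking
them according to `U`. -/
noncomputable def distTransform (P : Measure Ω) (Z U : Ω → ℝ) (ω : Ω) : ℝ :=
  P.real {ω' | Z ω' < Z ω} + (P.restrict {ω' | Z ω' = Z ω}).real {ω' | U ω' ≤ U ω}

lemma measureReal_lt_le_distTransform (ω : Ω) :
    P.real {ω' | Z ω' < Z ω} ≤ distTransform P Z U ω :=
  le_add_of_nonneg_right measureReal_nonneg

lemma distTransform_eq (hU : Measurable U) (ω : Ω) :
    distTransform P Z U ω =
      P.real {ω' | Z ω' < Z ω} + P.real ({ω' | U ω' ≤ U ω} ∩ {ω' | Z ω' = Z ω}) := by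
  rw [distTransform, measureReal_restrict_apply (measurableSet_le hU measurable_const)]

variable [IsProbabilityMeasure P]

lemma exists_leftLim_cdfOf_le_le (hZ : Measurable Z) {v : ℝ} (hv0 : 0 < v) (hv1 : v < 1) :
    ∃ σ, Function.leftLim (cdfOf P Z) σ ≤ v ∧ v ≤ cdfOf P Z σ ∧
      ∀ t, σ < t → v < Function.leftLim (cdfOf P Z) t := by
  have hmono := monotone_cdfOf (P := P) Z
  have hne : {t | v < cdfOf P Z t}.Nonempty :=
    ((tendsto_cdfOf_atTop hZ).eventually (lt_mem_nhds hv1)).exists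
  obtain ⟨a, ha⟩ := ((tendsto_cdfOf_atBot (P := P) hZ).eventually (gt_mem_nhds hv0)).exists
  have hbdd : BddBelow {t | v < cdfOf P Z t} :=
    ⟨a, fun t (ht : v < _) => le_of_not_gt fun hta => (ha.trans ht).not_ge (hmono hta.le)⟩
  have hgt : ∀ t, sInf {t | v < cdfOf P Z t} < t → ∃ t' < t, v < cdfOf P Z t' := fun t ht =>
    let ⟨t', ht'A, ht'⟩ := exists_lt_of_csInf_lt hne ht
    ⟨t', ht', ht'A⟩
  refine ⟨sInf {t | v < cdfOf P Z t}, ?_, ?_, fun t ht => ?_⟩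
  · exact le_of_tendsto (hmono.tendsto_leftLim _) (eventually_nhdsWithin_of_forall
      fun t (ht : t < _) => not_lt.1 (notMem_of_lt_csInf (s := {t | v < cdfOf P Z t}) ht hbdd))
  · have hrc : ContinuousWithinAt (cdfOf P Z) (Ioi (sInf {t | v < cdfOf P Z t}))
        (sInf {t | v < cdfOf P Z t}) := by
      rw [cdfOf_eq_cdf_map hZ]
      exact ((cdf _).right_continuous _).mono Ioi_subset_Ici_self
    refine ge_of_tendsto hrc (eventually_nhdsWithin_of_forall fun t ht => ?_)
    obtain ⟨t', ht', hvt'⟩ := hgt t ht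
    exact hvt'.le.trans (hmono ht'.le)
  · obtain ⟨t', ht', hvt'⟩ := hgt t ht
    exact hvt'.trans_le (hmono.le_leftLim ht')

lemma distTransform_le_cdfOf (hZ : Measurable Z) (hU : Measurable U) (ω : Ω) :
    distTransform P Z U ω ≤ cdfOf P Z (Z ω) := by
  rw [distTransform_eq hU, cdfOf, ← measureReal_def, measureReal_le_eq_lt_add_eq hZ]
  exact add_le_add_right (measureReal_mono inter_subset_right) _

lemma measurable_distTransform (hZ : Measurable Z) (hU : IsStdUniform P U) :
    Measurable (distTransform P Z U) := by
  have hle : Measurable fun ω => P.real ({ω' | U ω' ≤ U ω} ∩ {ω' | Z ω' ≤ Z ω}) :=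
    (measurable_uncurry_of_monotone_of_continuous
      (H := fun t u => P.real ({ω' | U ω' ≤ u} ∩ {ω' | Z ω' ≤ t}))
      (fun _ _ _ h => measureReal_mono (inter_subset_inter_right _
        fun _ (h' : Z _ ≤ _) => h'.trans h))
      fun _ => hU.continuous_measureReal_le_inter _).comp (hZ.prodMk hU.measurable)
  have hlt : Measurable fun ω => P.real ({ω' | U ω' ≤ U ω} ∩ {ω' | Z ω' < Z ω}) :=
    (measurable_uncurry_of_monotone_of_continuous
      (H := fun t u => P.real ({ω' | U ω' ≤ u} ∩ {ω' | Z ω' < t}))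
      (fun _ _ _ h => measureReal_mono (inter_subset_inter_right _
        fun _ (h' : Z _ < _) => h'.trans_le h))
      fun _ => hU.continuous_measureReal_le_inter _).comp (hZ.prodMk hU.measurable)
  have hstrict : Monotone fun t => P.real {ω | Z ω < t} := fun _ _ h =>
    measureReal_mono fun _ (h' : Z _ < _) => h'.trans_le h
  have heq : distTransform P Z U = fun ω => P.real {ω' | Z ω' < Z ω} +
      (P.real ({ω' | U ω' ≤ U ω} ∩ {ω' | Z ω' ≤ Z ω}) -
        P.real ({ω' | U ω' ≤ U ω} ∩ {ω' | Z ω' < Z ω})) := by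
    ext ω
    rw [distTransform_eq hU.measurable,
      measureReal_inter_le_eq_add (measurableSet_le hU.measurable measurable_const) hZ]
    ring
  rw [heq]
  exact (hstrict.measurable.comp hZ).add (hle.sub hlt)

lemma setOf_distTransform_le_eq (hZ : Measurable Z) (hU : Measurable U) {v σ : ℝ}
    (hσ₁ : Function.leftLim (cdfOf P Z) σ ≤ v)
    (hσ₃ : ∀ t, σ < t → v < Function.leftLim (cdfOf P Z) t) :
    {ω | distTransform P Z U ω ≤ v} = {ω | Z ω < σ} ∪
      ({ω | (P.restrict {ω | Z ω = σ}).real {ω' | U ω' ≤ U ω} ≤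
        v - Function.leftLim (cdfOf P Z) σ} ∩ {ω | Z ω = σ}) := by
  ext ω
  simp only [mem_union, mem_inter_iff, mem_ofPred_eq]
  rcases lt_trichotomy (Z ω) σ with h | h | h
  · refine iff_of_true ?_ (Or.inl h)
    calc distTransform P Z U ω ≤ cdfOf P Z (Z ω) := distTransform_le_cdfOf hZ hU ω
      _ ≤ Function.leftLim (cdfOf P Z) σ := (monotone_cdfOf Z).le_leftLim h
      _ ≤ v := hσ₁
  · rw [distTransform, h, measureReal_lt_eq_leftLim_cdfOf hZ]
    simp only [lt_irrefl, false_or, and_true]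
    constructor <;> intro <;> linarith
  · refine iff_of_false (fun hle => ?_) (by rintro (h' | ⟨_, h'⟩) <;> linarith)
    have := measureReal_lt_le_distTransform (P := P) (Z := Z) (U := U) ω
    rw [measureReal_lt_eq_leftLim_cdfOf hZ] at this
    linarith [hσ₃ _ h]

lemma isStdUniform_distTransform (hZ : Measurable Z) (hU : IsStdUniform P U) :
    IsStdUniform P (distTransform P Z U) := by
  refine .of_Ioo (measurable_distTransform hZ hU) (fun ω => ⟨?_, ?_⟩) fun v hv => ?_
  · exact measureReal_nonneg.trans (measureReal_lt_le_distTransform ω)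
  · exact (distTransform_le_cdfOf hZ hU.measurable ω).trans (cdfOf_le_one Z _)
  obtain ⟨σ, hσ₁, hσ₂, hσ₃⟩ := exists_leftLim_cdfOf_le_le (P := P) hZ hv.1 hv.2
  set μ := P.restrict {ω | Z ω = σ}
  set s := v - Function.leftLim (cdfOf P Z) σ
  have hμ : ∀ u, μ.real {ω | U ω ≤ u} = P.real ({ω | U ω ≤ u} ∩ {ω | Z ω = σ}) := fun u =>
    measureReal_restrict_apply (measurableSet_le hU.measurable measurable_const)
  have hcont : Continuous fun u => μ.real {ω | U ω ≤ u} := by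
    simpa only [hμ] using hU.continuous_measureReal_le_inter {ω | Z ω = σ}
  have hmeas : MeasurableSet {ω | μ.real {ω' | U ω' ≤ U ω} ≤ s} :=
    measurableSet_le (hcont.measurable.comp hU.measurable) measurable_const
  have ha : μ.real {ω | U ω ≤ 0} ≤ s := by
    rw [hμ]
    calc _ ≤ P.real {ω | U ω ≤ 0} := measureReal_mono inter_subset_left
      _ = 0 := hU.measureReal_le 0 ⟨le_rfl, zero_le_one⟩
      _ ≤ s := sub_nonneg.2 hσ₁
  have hs : s ≤ μ.real univ := by
    have h₁ := measureReal_le_eq_lt_add_eq (P := P) hZ σ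
    have h₂ := measureReal_lt_eq_leftLim_cdfOf (P := P) hZ σ
    rw [cdfOf, ← measureReal_def] at hσ₂
    rw [measureReal_restrict_apply_univ]
    linarith
  rw [setOf_distTransform_le_eq hZ hU.measurable hσ₁ hσ₃, measureReal_union (s₁ := {ω | Z ω < σ})
      (disjoint_left.2 fun ω (h₁ : Z ω < σ) h₂ => h₁.ne h₂.2)
      (hmeas.inter (measurableSet_eq_fun hZ measurable_const)),
    ← measureReal_restrict_apply hmeas, measureReal_cdf_comp_le hU.measurable hcont ha hs,
    measureReal_lt_eq_leftLim_cdfOf hZ]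
  ring

end DistTransform

noncomputable def quantile (F : ℝ → ℝ) (u : ℝ) : ℝ := sInf {x | u ≤ F x}

lemma quantile_le_iff {F : ℝ → ℝ} (hmono : Monotone F) (hcont : Continuous F)
    (hbot : Tendsto F atBot (𝓝 0)) (htop : Tendsto F atTop (𝓝 1)) {u : ℝ}
    (hu : u ∈ Ioo (0 : ℝ) 1) (x : ℝ) : quantile F u ≤ x ↔ u ≤ F x := by
  have hne : {x | u ≤ F x}.Nonempty :=
    (htop.eventually (lt_mem_nhds hu.2)).exists.imp fun _ h => h.le
  obtain ⟨a, ha⟩ := (hbot.eventually (gt_mem_nhds hu.1)).exists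
  have hbdd : BddBelow {x | u ≤ F x} :=
    ⟨a, fun y (hy : u ≤ F y) => le_of_not_gt fun hya => (hy.trans (hmono hya.le)).not_gt ha⟩
  have hmem : u ≤ F (quantile F u) := (isClosed_le continuous_const hcont).csInf_mem hne hbdd
  exact ⟨fun h => hmem.trans (hmono h), fun h => csInf_le hbdd h⟩

section Coupling

variable {Ω : Type*} [MeasurableSpace Ω] {P : Measure Ω} [IsProbabilityMeasure P]

lemma isStdUniform_cdfOf_comp {Y : Ω → ℝ} (hY : Measurable Y) (hcont : Continuous (cdfOf P Y)) :
    IsStdUniform P fun ω => cdfOf P Y (Y ω) := by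
  refine .of_Ioo (hcont.measurable.comp hY) (fun ω => ⟨cdfOf_nonneg _ _, cdfOf_le_one _ _⟩)
    fun u hu => ?_
  obtain ⟨a, ha⟩ := ((tendsto_cdfOf_atBot (P := P) hY).eventually (gt_mem_nhds hu.1)).exists
  exact measureReal_cdf_comp_le hY hcont ha.le (by rw [probReal_univ]; exact hu.2.le)

lemma exists_cdfOf_eq_of_isStdUniform {Y₀ W : Ω → ℝ} (hY₀ : Measurable Y₀)
    (hcont : Continuous (cdfOf P Y₀)) (hW : IsStdUniform P W) :
    ∃ Y : Ω → ℝ, Measurable Y ∧ cdfOf P Y = cdfOf P Y₀ ∧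
      ∀ ω, W ω ∈ Ioo (0 : ℝ) 1 → ∀ x, Y ω ≤ x ↔ W ω ≤ cdfOf P Y₀ x := by
  classical
  set W' : Ω → ℝ := fun ω => if W ω ∈ Ioo (0 : ℝ) 1 then W ω else 1 / 2
  have hW' : ∀ ω, W' ω ∈ Ioo (0 : ℝ) 1 := fun ω => by
    simp only [W']
    split_ifs with h
    exacts [h, by norm_num]
  have hgc : ∀ ω x, quantile (cdfOf P Y₀) (W' ω) ≤ x ↔ W' ω ≤ cdfOf P Y₀ x := fun ω =>
    quantile_le_iff (monotone_cdfOf Y₀) hcont (tendsto_cdfOf_atBot hY₀)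
      (tendsto_cdfOf_atTop hY₀) (hW' ω)
  have hae : ∀ c, {ω | W' ω ≤ c} =ᵐ[P] {ω | W ω ≤ c} := by
    intro c
    filter_upwards [hW.ae_ne 0, hW.ae_ne 1] with ω h0 h1
    have : W ω ∈ Ioo (0 : ℝ) 1 :=
      ⟨(hW.mem_Icc ω).1.lt_of_ne' h0, (hW.mem_Icc ω).2.lt_of_ne h1⟩
    change (W' ω ≤ c) = (W ω ≤ c)
    simp only [W', if_pos this]
  refine ⟨fun ω => quantile (cdfOf P Y₀) (W' ω), measurable_of_Iic fun x => ?_,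
    funext fun x => ?_, fun ω hω x => ?_⟩
  · rw [show (fun ω => quantile (cdfOf P Y₀) (W' ω)) ⁻¹' Iic x = {ω | W' ω ≤ cdfOf P Y₀ x} by
      ext ω; exact hgc ω x]
    exact measurableSet_le ((hW.measurable.ite (hW.measurable measurableSet_Ioo)
      measurable_const)) measurable_const
  · rw [cdfOf, ← measureReal_def,
      show {ω | quantile (cdfOf P Y₀) (W' ω) ≤ x} = {ω | W' ω ≤ cdfOf P Y₀ x} by
        ext ω; exact hgc ω x,
      measureReal_congr (hae _), hW.measureReal_le _ ⟨cdfOf_nonneg _ _, cdfOf_le_one _ _⟩]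
  · rw [← show W' ω = W ω from if_pos hω]
    exact hgc ω x

/-- `Y` is the `F_{Y₀}`-quantile of the distributional transform `V` of `Z`, rotated by
`θ = κ + ε`: where `V < 1 - θ`, `Y ≤ Z` would give `V + θ ≤ F_{Y₀}(Z) ≤ κ + V`. -/
theorem exists_cdfOf_eq_measureReal_le_le {Y₀ Z : Ω → ℝ} (hY₀ : Measurable Y₀)
    (hcont : Continuous (cdfOf P Y₀)) (hZ : Measurable Z) {κ ε : ℝ} (hκ : 0 ≤ κ) (hε : 0 < ε)
    (hle : ∀ t, cdfOf P Y₀ t ≤ κ + P.real {ω | Z ω < t}) :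
    ∃ Y : Ω → ℝ, Measurable Y ∧ cdfOf P Y = cdfOf P Y₀ ∧ P.real {ω | Y ω ≤ Z ω} ≤ κ + ε := by
  rcases le_or_gt 1 (κ + ε) with h1 | h1
  · exact ⟨Y₀, hY₀, rfl, measureReal_le_one.trans h1⟩
  set θ := κ + ε
  set V := distTransform P Z fun ω => cdfOf P Y₀ (Y₀ ω)
  have hV : IsStdUniform P V := isStdUniform_distTransform hZ (isStdUniform_cdfOf_comp hY₀ hcont)
  obtain ⟨Y, hY, hYcdf, hYW⟩ :=
    exists_cdfOf_eq_of_isStdUniform hY₀ hcont (hV.rotate (by positivity) h1)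
  refine ⟨Y, hY, hYcdf, ?_⟩
  calc P.real {ω | Y ω ≤ Z ω} ≤ P.real {ω | 1 - θ ≤ V ω} := by
        refine measureReal_mono fun ω (hω : Y ω ≤ Z ω) => show 1 - θ ≤ V ω from
          not_lt.1 fun hlt => ?_
        have hW := hYW ω (by rw [if_pos hlt]; constructor <;> linarith [(hV.mem_Icc ω).1]) (Z ω)
        rw [if_pos hlt] at hW
        linarith [hW.1 hω, hle (Z ω), measureReal_lt_le_distTransform (P := P) (Z := Z)
          (U := fun ω => cdfOf P Y₀ (Y₀ ω)) ω]
    _ = θ := by rw [hV.measureReal_ge_eq ⟨by linarith, by linarith⟩]; ring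

end Coupling

section Distortion

variable {Ω : Type*} [MeasurableSpace Ω] {P : Measure Ω} [IsProbabilityMeasure P] {g : ℝ → ℝ}

lemma IsDistortion.comp_survival_mem_Icc (hg : IsDistortion g) (W : Ω → ℝ) (v : ℝ) :
    g (1 - cdfOf P W v) ∈ Icc (0 : ℝ) 1 :=
  hg.2.1 _ (one_sub_cdfOf_mem_Icc W v)

lemma IsDistortion.antitone_comp_survival (hg : IsDistortion g) (W : Ω → ℝ) :
    Antitone fun v => g (1 - cdfOf P W v) := fun a b hab =>
  hg.1 (one_sub_cdfOf_mem_Icc W b) (one_sub_cdfOf_mem_Icc W a)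
    (sub_le_sub_left (monotone_cdfOf W hab) 1)

lemma IsDistortion.comp_survival_eq_zero (hg : IsDistortion g) {W : Ω → ℝ} {m v : ℝ}
    (hW : ∀ᵐ ω ∂P, W ω ≤ m) (hv : m ≤ v) : g (1 - cdfOf P W v) = 0 := by
  rw [cdfOf_eq_one_of_ae_le hW hv, sub_self, hg.2.2.1]

lemma IsDistortion.integrableOn_comp_survival (hg : IsDistortion g) {W : Ω → ℝ} {m : ℝ}
    (hW : ∀ᵐ ω ∂P, W ω ≤ m) : IntegrableOn (fun v => g (1 - cdfOf P W v)) (Ioi 0) :=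
  (((hg.antitone_comp_survival W).antitoneOn _).integrableOn_isCompact
    isCompact_Icc).of_forall_sdiff_eq_zero measurableSet_Ioi fun _ ⟨hv0, hv⟩ =>
      hg.comp_survival_eq_zero hW (le_of_not_ge fun hvm => hv ⟨le_of_lt hv0, hvm⟩)

lemma IsDistortion.distExp_nonneg (hg : IsDistortion g) (W : Ω → ℝ) : 0 ≤ distExp g P W :=
  setIntegral_nonneg measurableSet_Ioi fun v _ => (hg.comp_survival_mem_Icc W v).1

lemma setIntegral_Ioo_comp_add_right (f : ℝ → ℝ) {a b : ℝ} (hab : a ≤ b) :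
    ∫ u in Ioo 0 (b - a), f (u + a) = ∫ v in a..b, f v := by
  rw [← integral_Ioc_eq_integral_Ioo, ← intervalIntegral.integral_of_le (sub_nonneg.2 hab),
    intervalIntegral.integral_comp_add_right, zero_add, sub_add_cancel]

lemma IsDistortion.distExp_comp_Ifun (hg : IsDistortion g) (X : Ω → ℝ) {z y : ℝ} (hzy : z ≤ y) :
    distExp g P (fun ω => Ifun z y (X ω)) = ∫ v in z..y, g (1 - cdfOf P X v) := by
  have hle : ∀ ω, Ifun z y (X ω) ≤ y - z := fun ω => by
    unfold Ifun; split_ifs <;> linarith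
  have hcdf : ∀ u ∈ Ioo 0 (y - z), cdfOf P (fun ω => Ifun z y (X ω)) u = cdfOf P X (u + z) :=
    fun u ⟨hu0, hu⟩ => by
      unfold cdfOf
      congr 2
      ext ω
      simp only [mem_ofPred_eq, Ifun]
      split_ifs <;> constructor <;> intro <;> linarith
  calc distExp g P (fun ω => Ifun z y (X ω))
      = ∫ u in Ioo 0 (y - z), g (1 - cdfOf P (fun ω => Ifun z y (X ω)) u) :=
        setIntegral_eq_of_subset_of_forall_sdiff_eq_zero measurableSet_Ioi Ioo_subset_Ioi_self
          fun u ⟨hu0, hu⟩ => hg.comp_survival_eq_zero (ae_of_all _ hle)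
            (le_of_not_gt fun h => hu ⟨hu0, h⟩)
    _ = ∫ u in Ioo 0 (y - z), g (1 - cdfOf P X (u + z)) :=
        setIntegral_congr_fun measurableSet_Ioo fun u hu => by rw [hcdf u hu]
    _ = ∫ v in z..y, g (1 - cdfOf P X v) :=
        setIntegral_Ioo_comp_add_right (fun v => g (1 - cdfOf P X v)) hzy

lemma IsDistortion.integral_le_distExp (hg : IsDistortion g) {X W : Ω → ℝ} {m s y : ℝ}
    (hW : ∀ᵐ ω ∂P, W ω ≤ m) (hsy : s ≤ y)
    (hcdf : ∀ u ∈ Ioo 0 (y - s), cdfOf P W u ≤ cdfOf P X (u + s)) :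
    ∫ v in s..y, g (1 - cdfOf P X v) ≤ distExp g P W := by
  have hint := hg.integrableOn_comp_survival hW
  calc ∫ v in s..y, g (1 - cdfOf P X v)
      = ∫ u in Ioo 0 (y - s), g (1 - cdfOf P X (u + s)) :=
        (setIntegral_Ioo_comp_add_right (fun v => g (1 - cdfOf P X v)) hsy).symm
    _ ≤ ∫ u in Ioo 0 (y - s), g (1 - cdfOf P W u) := by
        refine setIntegral_mono_on ?_ (hint.mono_set Ioo_subset_Ioi_self) measurableSet_Ioo
          fun u hu => hg.1 (one_sub_cdfOf_mem_Icc X _) (one_sub_cdfOf_mem_Icc W u)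
            (sub_le_sub_left (hcdf u hu) 1)
        exact ((((hg.antitone_comp_survival X).comp_monotone (monotone_id.add_const s)).antitoneOn
          _).integrableOn_isCompact isCompact_Icc).mono_set Ioo_subset_Icc_self
    _ ≤ distExp g P W :=
        setIntegral_mono_set hint (ae_of_all _ fun v => (hg.comp_survival_mem_Icc W v).1)
          Ioo_subset_Ioi_self.eventuallyLE

end Distortion

lemma integral_add_le_integral_add {h : ℝ → ℝ} (hint : ∀ a b, IntervalIntegrable h volume a b)
    {z₀ : ℝ} (hlt : ∀ v < z₀, 1 ≤ h v) (hgt : ∀ v, z₀ < v → h v ≤ 1) {y z : ℝ} (hzy : z ≤ y) :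
    (∫ v in min y z₀..y, h v) + min y z₀ ≤ (∫ v in z..y, h v) + z := by
  rcases le_total z (min y z₀) with hz | hz
  · have : min y z₀ - z ≤ ∫ v in z..min y z₀, h v := by
      simpa using intervalIntegral.integral_mono_on_of_le_Ioo hz intervalIntegrable_const
        (hint _ _) fun v hv => hlt v (hv.2.trans_le (min_le_right _ _))
    rw [← intervalIntegral.integral_add_adjacent_intervals (hint z (min y z₀)) (hint _ y)]
    linarith
  · have : ∫ v in min y z₀..z, h v ≤ z - min y z₀ := by
      simpa using intervalIntegral.integral_mono_on_of_le_Ioo hz (hint _ _)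
        intervalIntegrable_const fun v hv =>
          hgt v ((min_lt_iff.1 hv.1).resolve_left (not_lt.2 (hv.2.trans_le hzy).le))
    rw [← intervalIntegral.integral_add_adjacent_intervals (hint (min y z₀) z) (hint z y)]
    linarith

namespace IsCeded

variable {I : ℝ → ℝ} (hI : IsCeded I)
include hI

lemma nonneg {x : ℝ} (hx : 0 ≤ x) : 0 ≤ I x := hI.1 ▸ hI.2.1 self_mem_Ici hx hx

lemma le_self {x : ℝ} (hx : 0 ≤ x) : I x ≤ x := by
  have := hI.2.2 self_mem_Ici hx hx
  simp only [hI.1, sub_zero] at this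
  linarith

lemma measurable_retained {Ω : Type*} [MeasurableSpace Ω] {X : Ω → ℝ} (hX : Measurable X)
    (hXnn : ∀ ω, 0 ≤ X ω) : Measurable fun ω => X ω - I (X ω) := by
  have hmono : Monotone fun x => max x 0 - I (max x 0) := fun a b hab =>
    hI.2.2 (le_max_right a 0) (le_max_right b 0) (max_le_max hab le_rfl)
  convert hmono.measurable.comp hX using 1
  ext ω
  simp only [Function.comp_apply, max_eq_left (hXnn ω)]

lemma exists_threshold {s M : ℝ} (hs : 0 ≤ s) (hM : 0 ≤ M) :
    ∃ y ∈ Icc 0 M, (∀ x ∈ Icc 0 M, x - I x ≤ s → x ≤ y) ∧ (∀ x ∈ Ico 0 y, x - s ≤ I x) ∧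
      (s ≤ y ∨ M < s) := by
  set S := {x | x ∈ Icc 0 M ∧ x - I x ≤ s}
  have h0 : (0 : ℝ) ∈ S := ⟨⟨le_rfl, hM⟩, by rw [hI.1]; linarith⟩
  have hbdd : BddAbove S := ⟨M, fun x hx => hx.1.2⟩
  refine ⟨sSup S, ⟨le_csSup hbdd h0, csSup_le ⟨0, h0⟩ fun x hx => hx.1.2⟩,
    fun x hx hxs => le_csSup hbdd ⟨hx, hxs⟩, fun x hx => ?_, ?_⟩
  · obtain ⟨x', hx'S, hxx'⟩ := exists_lt_of_lt_csSup ⟨0, h0⟩ hx.2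
    linarith [hI.2.2 hx.1 hx'S.1.1 hxx'.le, hx'S.2]
  · refine (le_or_gt s M).imp (fun hsM => le_csSup hbdd ⟨⟨hs, hsM⟩, ?_⟩) id
    linarith [hI.nonneg hs]

lemma le_add_of_le {s y u x : ℝ} (hlow : ∀ x ∈ Ico 0 y, x - s ≤ I x) (hs : 0 ≤ s)
    (hu : u ∈ Ioo 0 (y - s)) (hx : 0 ≤ x) (hIx : I x ≤ u) : x ≤ u + s := by
  by_contra! hxu
  obtain ⟨x', hx'₁, hx'₂⟩ := exists_between (lt_min hxu (by linarith [hu.2]) : u + s < min x y)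
  have h₁ := hlow x' ⟨by linarith [hu.1], hx'₂.trans_le (min_le_right x y)⟩
  have h₂ := hI.2.1 (show 0 ≤ x' by linarith [hu.1]) hx (hx'₂.le.trans (min_le_left x y))
  linarith

end IsCeded

lemma sub_Ifun_le {z y x : ℝ} (hx : x ≤ y) : x - Ifun z y x ≤ z := by
  unfold Ifun
  split_ifs <;> linarith

section Reinsurance

variable {Ω : Type*} [MeasurableSpace Ω] {P : Measure Ω} [IsProbabilityMeasure P]
  {X : Ω → ℝ} {M : ℝ} {F₀ g : ℝ → ℝ} {ϱ w₀ ξ z₀ : ℝ}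

lemma add_cdfOf_le_Kfun (hXnn : ∀ ω, 0 ≤ X ω) (hMbound : ∀ᵐ ω ∂P, X ω ≤ M)
    (hF₀ : Monotone F₀) (hg : IsDistortion g) (hϱ : 0 ≤ ϱ)
    (hz₀ : z₀ = sSup {z : ℝ | 1 ≤ (1 + ϱ) * g (1 - cdfOf P X z)}) {y z t : ℝ} (hzy : z ≤ y)
    (ht : t ≤ w₀ - (1 + ϱ) * (∫ v in z..y, g (1 - cdfOf P X v)) - ξ - z) :
    F₀ t + cdfOf P X y ≤ Kfun P X g F₀ ϱ w₀ ξ (min y z₀) y := by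
  set h := fun v => (1 + ϱ) * g (1 - cdfOf P X v)
  have hanti : Antitone h := fun a b hab =>
    mul_le_mul_of_nonneg_left (hg.antitone_comp_survival X hab) (by linarith)
  have hne : {z | 1 ≤ h z}.Nonempty := ⟨-1, by
    simp only [h, mem_ofPred_eq, cdfOf_eq_zero_of_lt fun ω => (neg_one_lt_zero.trans_le (hXnn ω)),
      sub_zero, hg.2.2.2]
    linarith⟩
  have hbdd : BddAbove {z | 1 ≤ h z} := ⟨M, fun v hv => le_of_not_gt fun hMv => by
    simp only [h, mem_ofPred_eq, hg.comp_survival_eq_zero hMbound hMv.le, mul_zero] at hv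
    linarith⟩
  have key := integral_add_le_integral_add (h := h) (fun a b => hanti.intervalIntegrable)
    (fun v hv => let ⟨z, hz, hvz⟩ := exists_lt_of_lt_csSup hne (hz₀ ▸ hv); hz.trans (hanti hvz.le))
    (fun v hv => not_lt.1 fun h' => (le_csSup hbdd h'.le).not_gt (hz₀ ▸ hv)) hzy
  simp only [h, intervalIntegral.integral_const_mul] at key
  have := hF₀ (show t ≤ w₀ - (1 + ϱ) * (∫ v in min y z₀..y, g (1 - cdfOf P X v)) - ξ - min y z₀
    by linarith)
  rw [Kfun]
  linarith

theorem le_max_add_measureReal_lt (hX : Measurable X) (hXnn : ∀ ω, 0 ≤ X ω)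
    (hMbound : ∀ᵐ ω ∂P, X ω ≤ M) (hF₀ : Monotone F₀) (hF₀le : ∀ x, F₀ x ≤ 1)
    (hg : IsDistortion g) (hϱ : 0 ≤ ϱ)
    (hz₀ : z₀ = sSup {z : ℝ | 1 ≤ (1 + ϱ) * g (1 - cdfOf P X z)}) {ys : ℝ}
    (hys : ys ∈ Icc (0 : ℝ) M)
    (hysmax : ∀ y ∈ Icc (0 : ℝ) M,
      Kfun P X g F₀ ϱ w₀ ξ (min y z₀) y ≤ Kfun P X g F₀ ϱ w₀ ξ (min ys z₀) ys)
    {I : ℝ → ℝ} (hI : IsCeded I) (t : ℝ) :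
    F₀ t ≤ max (Kfun P X g F₀ ϱ w₀ ξ (min ys z₀) ys - 1) 0 +
      P.real {ω | w₀ - ξ - (1 + ϱ) * distExp g P (fun ω => I (X ω)) - (X ω - I (X ω)) < t} := by
  set K := Kfun P X g F₀ ϱ w₀ ξ (min ys z₀) ys
  set π := (1 + ϱ) * distExp g P (fun ω => I (X ω))
  set s := w₀ - ξ - π - t
  have hK : ∀ y ∈ Icc (0 : ℝ) M, ∀ z ≤ y,
      t ≤ w₀ - (1 + ϱ) * (∫ v in z..y, g (1 - cdfOf P X v)) - ξ - z → F₀ t + cdfOf P X y ≤ K :=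
    fun y hy z hzy ht => (add_cdfOf_le_Kfun hXnn hMbound hF₀ hg hϱ hz₀ hzy ht).trans (hysmax y hy)
  have hπ : 0 ≤ π := mul_nonneg (by linarith) (hg.distExp_nonneg _)
  rw [show {ω | w₀ - ξ - π - (X ω - I (X ω)) < t} = {ω | s < X ω - I (X ω)} by
      ext ω; simp only [mem_ofPred_eq, s]; constructor <;> intro <;> linarith,
    measureReal_gt_eq_one_sub_cdfOf (hI.measurable_retained hX hXnn)]
  suffices F₀ t + cdfOf P (fun ω => X ω - I (X ω)) s ≤ 1 + max (K - 1) 0 by linarith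
  rcases lt_or_ge s 0 with hs | hs
  · rw [cdfOf_eq_zero_of_lt fun ω => hs.trans_le (sub_nonneg.2 (hI.le_self (hXnn ω)))]
    linarith [hF₀le t, le_max_right (K - 1) 0]
  obtain ⟨y, hyM, hyS, hyI, hsy | hMs⟩ := hI.exists_threshold hs (hys.1.trans hys.2)
  · have hRy : cdfOf P (fun ω => X ω - I (X ω)) s ≤ cdfOf P X y := by
      refine ENNReal.toReal_mono (measure_ne_top _ _) (measure_mono_ae ?_)
      filter_upwards [hMbound] with ω hω hRω using hyS (X ω) ⟨hXnn ω, hω⟩ hRω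
    have hint : ∫ v in s..y, g (1 - cdfOf P X v) ≤ distExp g P (fun ω => I (X ω)) :=
      hg.integral_le_distExp (m := M)
        (hMbound.mono fun ω hω => (hI.le_self (hXnn ω)).trans hω) hsy
        fun u hu => measureReal_mono fun ω hω => hI.le_add_of_le hyI hs hu (hXnn ω) hω
    have := hK y hyM s hsy (by nlinarith)
    linarith [le_max_left (K - 1) 0]
  · have := hK M ⟨hys.1.trans hys.2, le_rfl⟩ M le_rfl
      (by rw [intervalIntegral.integral_same]; linarith)
    rw [cdfOf_eq_one_of_ae_le hMbound le_rfl] at this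
    linarith [cdfOf_le_one (P := P) (fun ω => X ω - I (X ω)) s, le_max_left (K - 1) 0]

lemma sub_one_le_measureReal_Ifun (hX : Measurable X) (hg : IsDistortion g) {z y : ℝ}
    (hzy : z ≤ y) {Y : Ω → ℝ} (hY : ∀ x, cdfOf P Y x = F₀ x) :
    Kfun P X g F₀ ϱ w₀ ξ z y - 1 ≤ P.real {ω | ξ ≤ w₀ - Y ω - X ω + Ifun z y (X ω)
      - (1 + ϱ) * distExp g P (fun ω => Ifun z y (X ω))} := by
  set t := w₀ - (1 + ϱ) * (∫ v in z..y, g (1 - cdfOf P X v)) - ξ - z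
  have hsub : {ω | Y ω ≤ t} ⊆ {ω | ξ ≤ w₀ - Y ω - X ω + Ifun z y (X ω)
      - (1 + ϱ) * distExp g P (fun ω => Ifun z y (X ω))} ∪ {ω | y < X ω} := by
    intro ω (hω : Y ω ≤ t)
    refine (le_or_gt (X ω) y).imp (fun hXy => ?_) id
    have := sub_Ifun_le (z := z) hXy
    simp only [mem_ofPred_eq, hg.distExp_comp_Ifun X hzy]
    linarith
  have := (measureReal_mono (μ := P) hsub).trans (measureReal_union_le _ _)
  rw [measureReal_gt_eq_one_sub_cdfOf hX] at this
  have hYt : P.real {ω | Y ω ≤ t} = F₀ t := hY t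
  rw [Kfun]
  linarith

end Reinsurance

section RobustValue

variable {Ω : Type*} [MeasurableSpace Ω] {P : Measure Ω} {X : Ω → ℝ} {F₀ g : ℝ → ℝ}
  {ϱ w₀ ξ : ℝ} {I : ℝ → ℝ}

lemma robustVal_eq_zero_of_not_exists
    (h : ¬ ∃ Y : Ω → ℝ, Measurable Y ∧ ∀ z, cdfOf P Y z = F₀ z) (I : ℝ → ℝ) :
    robustVal P X g F₀ ϱ w₀ ξ I = 0 := by
  unfold robustVal
  convert Real.sInf_empty
  exact eq_empty_of_forall_notMem fun p ⟨Y, hY, hYF, _⟩ => h ⟨Y, hY, hYF⟩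

lemma le_robustVal {c : ℝ} (hne : ∃ Y : Ω → ℝ, Measurable Y ∧ ∀ z, cdfOf P Y z = F₀ z)
    (h : ∀ Y : Ω → ℝ, Measurable Y → (∀ z, cdfOf P Y z = F₀ z) →
      c ≤ P.real {ω | ξ ≤ w₀ - Y ω - X ω + I (X ω) - (1 + ϱ) * distExp g P (fun ω => I (X ω))}) :
    c ≤ robustVal P X g F₀ ϱ w₀ ξ I :=
  let ⟨Y, hY, hYF⟩ := hne
  le_csInf ⟨_, Y, hY, hYF, rfl⟩ fun _ ⟨Y, hY, hYF, hp⟩ => hp ▸ h Y hY hYF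

lemma robustVal_le {c : ℝ}
    (h : ∀ ε > 0, ∃ Y : Ω → ℝ, Measurable Y ∧ (∀ z, cdfOf P Y z = F₀ z) ∧
      P.real {ω | Y ω ≤ w₀ - ξ - (1 + ϱ) * distExp g P (fun ω => I (X ω)) - (X ω - I (X ω))}
        ≤ c + ε) :
    robustVal P X g F₀ ϱ w₀ ξ I ≤ c := by
  refine le_of_forall_pos_le_add fun ε hε => ?_
  obtain ⟨Y, hY, hYF, hle⟩ := h ε hε
  unfold robustVal
  refine csInf_le_of_le ⟨0, ?_⟩ ⟨Y, hY, hYF, rfl⟩ (le_of_eq_of_le ?_ hle)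
  · rintro _ ⟨_, _, _, rfl⟩
    exact ENNReal.toReal_nonneg
  congr 2
  ext ω
  simp only [mem_ofPred_eq]
  constructor <;> intro <;> linarith

end RobustValue

theorem optimal_robust_reinsurance_with_background_general {Ω : Type*} [MeasurableSpace Ω]
    (P : Measure Ω) [IsProbabilityMeasure P]
    (X : Ω → ℝ) (hX : Measurable X) (hXnn : ∀ ω, 0 ≤ X ω)
    (M : ℝ) (hMbound : ∀ᵐ ω ∂P, X ω ≤ M)
    (F₀ : ℝ → ℝ) (hF₀cont : Continuous F₀)
    (g : ℝ → ℝ) (hg : IsDistortion g)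
    (ϱ : ℝ) (hϱ : 0 ≤ ϱ)
    (w₀ ξ : ℝ)
    (z₀ : ℝ) (hz₀ : z₀ = sSup {z : ℝ | 1 ≤ (1 + ϱ) * g (1 - cdfOf P X z)})
    (ys : ℝ) (hys : ys ∈ Set.Icc (0 : ℝ) M)
    (hysmax : ∀ y ∈ Set.Icc (0 : ℝ) M,
      Kfun P X g F₀ ϱ w₀ ξ (min y z₀) y ≤ Kfun P X g F₀ ϱ w₀ ξ (min ys z₀) ys) :
    ∀ I : ℝ → ℝ, IsCeded I →
      robustVal P X g F₀ ϱ w₀ ξ I ≤ robustVal P X g F₀ ϱ w₀ ξ (Ifun (min ys z₀) ys) := by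
  intro I hI
  by_cases hfeas : ∃ Y : Ω → ℝ, Measurable Y ∧ ∀ z, cdfOf P Y z = F₀ z
  swap
  · rw [robustVal_eq_zero_of_not_exists hfeas, robustVal_eq_zero_of_not_exists hfeas]
  obtain ⟨Y₀, hY₀, hY₀F⟩ := hfeas
  obtain rfl : cdfOf P Y₀ = F₀ := funext hY₀F
  set κ := max (Kfun P X g (cdfOf P Y₀) ϱ w₀ ξ (min ys z₀) ys - 1) 0
  have hupper : robustVal P X g (cdfOf P Y₀) ϱ w₀ ξ I ≤ κ := robustVal_le fun ε hε => by
    obtain ⟨Y, hY, hYF, hYle⟩ := exists_cdfOf_eq_measureReal_le_le hY₀ hF₀cont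
      (measurable_const.sub (hI.measurable_retained hX hXnn)) (le_max_right _ _) hε
      (le_max_add_measureReal_lt hX hXnn hMbound (monotone_cdfOf Y₀) (cdfOf_le_one Y₀) hg hϱ hz₀
        hys hysmax hI)
    exact ⟨Y, hY, congrFun hYF, hYle⟩
  have hlower : κ ≤ robustVal P X g (cdfOf P Y₀) ϱ w₀ ξ (Ifun (min ys z₀) ys) :=
    le_robustVal ⟨Y₀, hY₀, fun _ => rfl⟩ fun Y _ hYF =>
      max_le (sub_one_le_measureReal_Ifun hX hg (min_le_left _ _) hYF) measureReal_nonneg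
  exact hupper.trans hlower

/-- **Theorem 3.2.** With `z₀ = sup{z : (1+ϱ)g(S_X(z)) ≥ 1}` and `y*` a
maximizer of `y ↦ K(min{y,z₀}, y)` over `[0,M]`, the contract `I* = I_{z*,y*}` with
`z* = min{y*, z₀}` is optimal for the distributionally robust problem
`sup_{I∈𝓘} inf_{Y∼F₀} ℙ(w₀ − Y − X + I(X) − π^g(I(X)) ≥ ξ)`. -/
theorem optimal_robust_reinsurance_with_background {Ω : Type*} [MeasurableSpace Ω]
    (P : Measure Ω) [IsProbabilityMeasure P] (hatomless : Atomless P)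
    (X : Ω → ℝ) (hX : Measurable X) (hXnn : ∀ ω, 0 ≤ X ω)
    (M : ℝ) (hMbound : ∀ᵐ ω ∂P, X ω ≤ M)
    (hMleast : ∀ M' : ℝ, (∀ᵐ ω ∂P, X ω ≤ M') → M ≤ M')
    (F₀ : ℝ → ℝ) (hF₀mono : Monotone F₀) (hF₀cont : Continuous F₀)
    (hF₀bot : Tendsto F₀ atBot (𝓝 0)) (hF₀top : Tendsto F₀ atTop (𝓝 1))
    (g : ℝ → ℝ) (hg : IsDistortion g)
    (ϱ : ℝ) (hϱ : 0 ≤ ϱ)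
    (w₀ ξ : ℝ)
    (z₀ : ℝ) (hz₀ : z₀ = sSup {z : ℝ | 1 ≤ (1 + ϱ) * g (1 - cdfOf P X z)})
    (ys : ℝ) (hys : ys ∈ Set.Icc (0 : ℝ) M)
    (hysmax : ∀ y ∈ Set.Icc (0 : ℝ) M,
      Kfun P X g F₀ ϱ w₀ ξ (min y z₀) y ≤ Kfun P X g F₀ ϱ w₀ ξ (min ys z₀) ys) :
    ∀ I : ℝ → ℝ, IsCeded I →
      robustVal P X g F₀ ϱ w₀ ξ I ≤ robustVal P X g F₀ ϱ w₀ ξ (Ifun (min ys z₀) ys) :=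
  optimal_robust_reinsurance_with_background_general P X hX hXnn M hMbound F₀ hF₀cont g hg ϱ hϱ w₀ ξ
    z₀ hz₀ ys hys hysmax
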